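/- arXiv:2507.09794 — 7 statements merged into one kernel-verified Lean document; each statement's English description precedes it below -/
import Mathlib

section
/- Under the procrastination policy with time-invariant prices, if at time t (with T − t intervals remaining, per-interval charging cap v̄) the remaining demand satisfies y_t ≤ (T − t)·v̄ + min(v̄, g_t), then following the policy v_s = clamp of remaining demand as in the threshold rule guarantees the remaining demand at time T is 0, assuming g_s ≥ 0 for all s. -/
/-- feasibility of the procrastination policy under time-invariant prices.
With threshold `θ_s = (T − s)·v̄`, the policy takes `v_s = min(y_s, v̄)` when `y_s > θ_s`
and `v_s = min(y_s, v̄, g_s)` otherwise.  If at time `t` the remaining demand satisfies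
`y_t ≤ (T − t)·v̄ + min(v̄, g_t)`, then the remaining demand after the final interval `T`
is zero. -/
theorem procrastination_feasible (T t : ℕ) (ht : t ≤ T)
    (vbar : ℝ) (hv : 0 ≤ vbar) (g : ℕ → ℝ) (hg : ∀ s, 0 ≤ g s)
    (y v : ℕ → ℝ) (hy0 : 0 ≤ y t)
    (hpolicy : ∀ s, v s =
      if y s > ((T - s : ℕ) : ℝ) * vbar then min (y s) vbar
      else min (y s) (min vbar (g s)))
    (hdyn : ∀ s, y (s + 1) = y s - v s)
    (hinit : y t ≤ ((T - t : ℕ) : ℝ) * vbar + min vbar (g t)) :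
    y (T + 1) = 0 := by
  have key : ∀ s, t ≤ s → s ≤ T → 0 ≤ y s ∧ y s ≤ ((T - s : ℕ) : ℝ) * vbar + vbar := by
    intro s hs
    induction s, hs using Nat.le_induction with
    | base =>
      intro _
      exact ⟨hy0, hinit.trans (by gcongr; exact min_le_left _ _)⟩
    | succ n hn ih =>
      intro hnT
      obtain ⟨h0, hle⟩ := ih (by omega)
      have hc : (T - n : ℕ) = (T - (n + 1)) + 1 := by omega
      have hcast : ((T - n : ℕ) : ℝ) = ((T - (n + 1) : ℕ) : ℝ) + 1 := by
        rw [hc]; push_cast; ring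
      have hrec : y (n + 1) = y n - v n := hdyn n
      rw [hpolicy n] at hrec
      by_cases h : y n > ((T - n : ℕ) : ℝ) * vbar
      · rw [if_pos h] at hrec
        constructor
        · rw [hrec]; have := min_le_left (y n) vbar; linarith
        · rcases le_total (y n) vbar with h1 | h1
          · rw [hrec, min_eq_left h1]
            have : 0 ≤ ((T - (n + 1) : ℕ) : ℝ) * vbar := by positivity
            linarith
          · rw [hrec, min_eq_right h1]
            rw [hcast] at hle
            nlinarith
      · rw [if_neg h] at hrec
        push_neg at h
        have hv0 : 0 ≤ min (y n) (min vbar (g n)) :=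
          le_min h0 (le_min hv (hg n))
        constructor
        · rw [hrec]; have := min_le_left (y n) (min vbar (g n)); linarith
        · rw [hcast] at h
          rw [hrec]; nlinarith
  obtain ⟨h0, hle⟩ := key T ht le_rfl
  have hTT : ((T - T : ℕ) : ℝ) = 0 := by simp
  rw [hTT, zero_mul, zero_add] at hle
  have hrec : y (T + 1) = y T - v T := hdyn T
  rw [hpolicy T, hTT, zero_mul] at hrec
  by_cases h : y T > 0
  · rw [if_pos h, min_eq_left hle] at hrec
    linarith
  · push_neg at h
    have hy : y T = 0 := le_antisymm h h0
    rw [if_neg (by simp [hy]), hy] at hrec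
    rw [hrec]
    simp [le_min hv (hg T)]
end

section
/- In the deterministic single-commodity problem with time-invariant prices π⁺ > π⁻, an optimal schedule never purchases power in interval t if the remaining demand y_t satisfies y_t ≤ (T − t)·v̄ + min(v̄, g_t): i.e., there exists an optimal feasible schedule with v_t ≤ min(v̄, g_t) whenever y_t − min(v̄, g_t) ≤ (T − t)·v̄. -/
noncomputable def nemP (pb ps : ℝ) (z : ℝ) : ℝ := pb * max z 0 - ps * max (-z) 0

/-- Feasible schedules: serve total demand `y₁` in `T` intervals, `0 ≤ v_t ≤ v̄`. -/
def FeasSched (T : ℕ) (vbar y₁ : ℝ) (v : ℕ → ℝ) : Prop :=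
  (∀ t < T, 0 ≤ v t ∧ v t ≤ vbar) ∧ ∑ t ∈ Finset.range T, v t = y₁

/-- Remaining demand at the start of interval `t` (0-indexed). -/
noncomputable def remDemand (y₁ : ℝ) (v : ℕ → ℝ) (t : ℕ) : ℝ :=
  y₁ - ∑ s ∈ Finset.range t, v s

/-!
Since `nemP pb ps z = ps * z + (pb - ps) * z⁺` and every feasible schedule has the same total
`∑ v_t = y₁`, only the total purchase `∑ (v_t - g_t)⁺` matters. For `v_t ≤ v̄` the purchase in
interval `t` is `(v_t - m_t)⁺` with `m_t = min v̄ g_t`, so every feasible schedule buys at least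
`(y₁ - ∑ m_t)⁺`. The greedy schedule that covers the remaining demand from `m_t` and defers the
rest as long as the later intervals can still absorb it attains this bound, and by construction
it buys nothing in an interval where the deferred demand fits.
-/

open Finset

lemma nemP_eq (pb ps z : ℝ) : nemP pb ps z = ps * z + (pb - ps) * max z 0 := by
  rw [nemP]
  linear_combination ps * max_zero_sub_max_neg_zero_eq_self z

lemma sum_nemP_sub_eq (pb ps : ℝ) {T : ℕ} {y₁ : ℝ} {u : ℕ → ℝ} (g : ℕ → ℝ)
    (hu : ∑ t ∈ range T, u t = y₁) :
    ∑ t ∈ range T, nemP pb ps (u t - g t) =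
      ps * (y₁ - ∑ t ∈ range T, g t) + (pb - ps) * ∑ t ∈ range T, max (u t - g t) 0 := by
  simp only [nemP_eq, sum_add_distrib, ← mul_sum, sum_sub_distrib, hu]

lemma max_sub_min_eq {x a : ℝ} (hx : x ≤ a) (b : ℝ) :
    max (x - min a b) 0 = max (x - b) 0 := by
  rcases le_total a b with h | h
  · rw [min_eq_left h, max_eq_right (by linarith), max_eq_right (by linarith)]
  · rw [min_eq_right h]

lemma max_sub_add_max_sub_of_mem_uIcc {a c M : ℝ} (hc : c ∈ Set.uIcc a M) :
    max (a - c) 0 + max (c - M) 0 = max (a - M) 0 := by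
  rcases Set.mem_uIcc.mp hc with ⟨h₁, h₂⟩ | ⟨h₁, h₂⟩
  · rw [max_eq_right (by linarith), max_eq_right (by linarith), max_eq_right (by linarith)]
    ring
  · rw [max_eq_left (by linarith), max_eq_left (by linarith), max_eq_left (by linarith)]
    ring

lemma min_max_zero_mem_uIcc {a M D : ℝ} (hM : 0 ≤ M) (hMD : M ≤ D) :
    min (max a 0) D ∈ Set.uIcc a M := by
  rcases le_total a 0 with ha | ha
  · rw [max_eq_right ha, min_eq_left (hM.trans hMD)]
    exact Set.mem_uIcc.mpr (Or.inl ⟨ha, hM⟩)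
  · rw [max_eq_left ha]
    rcases le_total a D with haD | haD
    · rw [min_eq_left haD]
      exact Set.left_mem_uIcc
    · rw [min_eq_right haD]
      exact Set.mem_uIcc.mpr (Or.inr ⟨hMD, haD⟩)

lemma sum_nemP_le_of_sum_excess_le {pb ps vbar y₁ : ℝ} {T : ℕ} {u w : ℕ → ℝ} (g : ℕ → ℝ)
    (hp : ps ≤ pb) (hu : FeasSched T vbar y₁ u) (hw : FeasSched T vbar y₁ w)
    (h : ∑ t ∈ range T, max (u t - min vbar (g t)) 0 ≤
      ∑ t ∈ range T, max (w t - min vbar (g t)) 0) :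
    ∑ t ∈ range T, nemP pb ps (u t - g t) ≤ ∑ t ∈ range T, nemP pb ps (w t - g t) := by
  have excess_eq {x : ℕ → ℝ} (hx : FeasSched T vbar y₁ x) :
      ∑ t ∈ range T, max (x t - min vbar (g t)) 0 = ∑ t ∈ range T, max (x t - g t) 0 :=
    sum_congr rfl fun t ht => max_sub_min_eq (hx.1 t (mem_range.mp ht)).2 _
  rw [sum_nemP_sub_eq pb ps g hu.2, sum_nemP_sub_eq pb ps g hw.2, ← excess_eq hu, ← excess_eq hw]
  gcongr

section Greedy

variable (vbar y₁ : ℝ) (m : ℕ → ℝ) (T : ℕ)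

/-- Demand carried into interval `t + 1`: whatever exceeds the own supply `m t`, capped by what
the `T - t - 1` later intervals can still serve. -/
noncomputable def greedyRemaining : ℕ → ℝ
  | 0 => y₁
  | t + 1 => min (max (greedyRemaining t - m t) 0) (((T - t - 1 : ℕ) : ℝ) * vbar)

noncomputable def greedySchedule (t : ℕ) : ℝ :=
  greedyRemaining vbar y₁ m T t - greedyRemaining vbar y₁ m T (t + 1)

lemma remDemand_greedySchedule (t : ℕ) :
    remDemand y₁ (greedySchedule vbar y₁ m T) t = greedyRemaining vbar y₁ m T t := by
  simp only [remDemand, greedySchedule, sum_range_sub', greedyRemaining.eq_1, sub_sub_cancel]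

variable {vbar y₁ m T}

lemma greedyRemaining_nonneg (hv : 0 ≤ vbar) (hy₁ : 0 ≤ y₁) :
    ∀ t, 0 ≤ greedyRemaining vbar y₁ m T t
  | 0 => hy₁
  | t + 1 => le_min (le_max_right _ _) (by positivity)

lemma greedyRemaining_le (hy₂ : y₁ ≤ T * vbar) :
    ∀ t, greedyRemaining vbar y₁ m T t ≤ ((T - t : ℕ) : ℝ) * vbar
  | 0 => by simpa [greedyRemaining] using hy₂
  | t + 1 => by rw [Nat.sub_add_eq]; exact min_le_right _ _

lemma greedySchedule_le_of_sub_le {t : ℕ}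
    (h : greedyRemaining vbar y₁ m T t - m t ≤ ((T - t - 1 : ℕ) : ℝ) * vbar) :
    greedySchedule vbar y₁ m T t ≤ m t := by
  have : greedyRemaining vbar y₁ m T t - m t ≤ greedyRemaining vbar y₁ m T (t + 1) :=
    le_min (le_max_left _ _) h
  rw [greedySchedule]
  linarith

lemma feasSched_greedySchedule (hv : 0 ≤ vbar) (hy₁ : 0 ≤ y₁) (hy₂ : y₁ ≤ T * vbar)
    (hm₀ : ∀ t, 0 ≤ m t) (hm : ∀ t, m t ≤ vbar) :
    FeasSched T vbar y₁ (greedySchedule vbar y₁ m T) := by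
  have hY₀ := greedyRemaining_nonneg (m := m) (T := T) hv hy₁
  have hY := greedyRemaining_le (vbar := vbar) (m := m) hy₂
  refine ⟨fun t ht => ⟨?_, ?_⟩, ?_⟩
  · have hcarry : greedyRemaining vbar y₁ m T (t + 1) ≤
        max (greedyRemaining vbar y₁ m T t - m t) 0 := min_le_left _ _
    have hexcess := max_le (sub_le_self _ (hm₀ t)) (hY₀ t)
    rw [greedySchedule]
    linarith
  · have hcap : greedyRemaining vbar y₁ m T t ≤ ((T - t - 1 : ℕ) : ℝ) * vbar + vbar := by
      have := hY t
      rwa [← Nat.sub_add_cancel (Nat.sub_pos_of_lt ht), Nat.cast_succ, add_one_mul] at this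
    have hcarry : greedyRemaining vbar y₁ m T t - vbar ≤ greedyRemaining vbar y₁ m T (t + 1) :=
      le_min ((sub_le_sub_left (hm t) _).trans (le_max_left _ _)) (by linarith)
    rw [greedySchedule]
    linarith
  · have hT : greedyRemaining vbar y₁ m T T = 0 :=
      le_antisymm (by simpa using hY T) (hY₀ T)
    have hrem := remDemand_greedySchedule vbar y₁ m T T
    rw [remDemand, hT] at hrem
    linarith

lemma sum_Ico_excess_greedySchedule (hy₂ : y₁ ≤ T * vbar) (hm₀ : ∀ t, 0 ≤ m t)
    (hm : ∀ t, m t ≤ vbar) {t : ℕ} (ht : t ≤ T) :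
    ∑ s ∈ Ico t T, max (greedySchedule vbar y₁ m T s - m s) 0 =
      max (greedyRemaining vbar y₁ m T t - ∑ s ∈ Ico t T, m s) 0 := by
  induction ht using Nat.decreasingInduction with
  | self => simpa using greedyRemaining_le (m := m) hy₂ T
  | of_succ k hk ih =>
    have hM₀ : 0 ≤ ∑ s ∈ Ico (k + 1) T, m s := sum_nonneg fun s _ => hm₀ s
    have hM : ∑ s ∈ Ico (k + 1) T, m s ≤ ((T - k - 1 : ℕ) : ℝ) * vbar :=
      (sum_le_card_nsmul _ _ _ fun s _ => hm s).trans_eq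
        (by rw [Nat.card_Ico, nsmul_eq_mul, Nat.sub_add_eq])
    rw [sum_eq_sum_Ico_succ_bot hk, sum_eq_sum_Ico_succ_bot hk, ih, greedySchedule,
      sub_right_comm (greedyRemaining vbar y₁ m T k), ← sub_sub]
    -- the carry-over lies between the demand beyond `m k` and the later own supply
    exact max_sub_add_max_sub_of_mem_uIcc (min_max_zero_mem_uIcc hM₀ hM)

lemma sum_excess_greedySchedule_le (hy₂ : y₁ ≤ T * vbar) (hm₀ : ∀ t, 0 ≤ m t)
    (hm : ∀ t, m t ≤ vbar) {w : ℕ → ℝ} (hw : ∑ t ∈ range T, w t = y₁) :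
    ∑ t ∈ range T, max (greedySchedule vbar y₁ m T t - m t) 0 ≤
      ∑ t ∈ range T, max (w t - m t) 0 := by
  have h := sum_Ico_excess_greedySchedule hy₂ hm₀ hm (Nat.zero_le T)
  rw [← range_eq_Ico] at h
  rw [h, greedyRemaining, ← hw, ← sum_sub_distrib]
  exact max_le (sum_le_sum fun t _ => le_max_left _ _) (sum_nonneg fun t _ => le_max_right _ _)

end Greedy

theorem exists_optimal_procrastinating_schedule_general
    (pb ps vbar y₁ : ℝ) (T : ℕ) (hp : ps < pb) (hv : 0 < vbar)
    (hy₁ : 0 ≤ y₁) (hy₂ : y₁ ≤ (T : ℝ) * vbar)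
    (g : ℕ → ℝ) (hg : ∀ t, 0 ≤ g t) :
    ∃ v : ℕ → ℝ, FeasSched T vbar y₁ v ∧
      (∀ w : ℕ → ℝ, FeasSched T vbar y₁ w →
        ∑ t ∈ Finset.range T, nemP pb ps (v t - g t) ≤
        ∑ t ∈ Finset.range T, nemP pb ps (w t - g t)) ∧
      (∀ t < T, remDemand y₁ v t - min vbar (g t) ≤ ((T - t - 1 : ℕ) : ℝ) * vbar →
        v t ≤ min vbar (g t)) := by
  have hm₀ (t : ℕ) : 0 ≤ min vbar (g t) := le_min hv.le (hg t)
  have hm (t : ℕ) : min vbar (g t) ≤ vbar := min_le_left _ _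
  have hfeas := feasSched_greedySchedule hv.le hy₁ hy₂ hm₀ hm
  refine ⟨greedySchedule vbar y₁ (fun t => min vbar (g t)) T, hfeas, fun w hw => ?_,
    fun t _ ht => ?_⟩
  · exact sum_nemP_le_of_sum_excess_le g hp.le hfeas hw
      (sum_excess_greedySchedule_le hy₂ hm₀ hm hw.2)
  · rw [remDemand_greedySchedule] at ht
    exact greedySchedule_le_of_sub_le ht

/-- there exists an optimal (payment-minimizing) feasible schedule that
never purchases power in interval `t` whenever
`y_t − min(v̄, g_t) ≤ (T − t − 1)·v̄` (remaining laxity suffices), i.e. `v_t ≤ min(v̄, g_t)`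
in such intervals. -/
theorem exists_optimal_procrastinating_schedule
    (pb ps vbar y₁ : ℝ) (T : ℕ) (hps : 0 ≤ ps) (hp : ps < pb) (hv : 0 < vbar)
    (hy₁ : 0 ≤ y₁) (hy₂ : y₁ ≤ (T : ℝ) * vbar)
    (g : ℕ → ℝ) (hg : ∀ t, 0 ≤ g t) :
    ∃ v : ℕ → ℝ, FeasSched T vbar y₁ v ∧
      (∀ w : ℕ → ℝ, FeasSched T vbar y₁ w →
        ∑ t ∈ Finset.range T, nemP pb ps (v t - g t) ≤
        ∑ t ∈ Finset.range T, nemP pb ps (w t - g t)) ∧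
      (∀ t < T, remDemand y₁ v t - min vbar (g t) ≤ ((T - t - 1 : ℕ) : ℝ) * vbar →
        v t ≤ min vbar (g t)) :=
  exists_optimal_procrastinating_schedule_general pb ps vbar y₁ T hp hv hy₁ hy₂ g hg
end

section
/- For a strictly concave differentiable utility U with decreasing derivative, the one-interval problem max_{0 ≤ d ≤ d̄} U(d) − P(d − g) has optimal solution d* = min(d̄, (U')⁻¹(π⁺)) if g ≤ min(d̄, (U')⁻¹(π⁺)); d* = min(d̄, (U')⁻¹(π⁻)) if g ≥ min(d̄, (U')⁻¹(π⁻)); and d* = g otherwise. -/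
/-- `q` is the extended inverse of `U'` at price `π`, clamped to `[0, d̄]`:
either `U'(q) = π`, or `q = 0` with `U'(0) < π`, or `q = d̄` with `U'(d̄) > π`. -/
def IsExtInv (U : ℝ → ℝ) (dbar : ℝ) (π q : ℝ) : Prop :=
  q ∈ Set.Icc 0 dbar ∧
    (deriv U q = π ∨ (q = 0 ∧ deriv U 0 < π) ∨ (q = dbar ∧ π < deriv U dbar))

lemma nemP_ge {pb ps p : ℝ} (h1 : ps ≤ p) (h2 : p ≤ pb) (b : ℝ) :
    p * b ≤ nemP pb ps b := by
  unfold nemP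
  rcases le_total 0 b with hb | hb
  · rw [max_eq_left hb, max_eq_right (by linarith : -b ≤ 0)]
    nlinarith
  · rw [max_eq_right hb, max_eq_left (by linarith : 0 ≤ -b)]
    nlinarith

lemma nemP_eq_pb {pb ps b : ℝ} (hb : 0 ≤ b) : nemP pb ps b = pb * b := by
  unfold nemP; rw [max_eq_left hb, max_eq_right (by linarith : -b ≤ 0)]; ring

lemma nemP_eq_ps {pb ps b : ℝ} (hb : b ≤ 0) : nemP pb ps b = ps * b := by
  unfold nemP; rw [max_eq_right hb, max_eq_left (by linarith : 0 ≤ -b)]; ring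

lemma grad_ineq {U : ℝ → ℝ} {dbar : ℝ}
    (hdiff : ∀ d ∈ Set.Icc 0 dbar, DifferentiableAt ℝ U d)
    (hanti : StrictAntiOn (deriv U) (Set.Icc 0 dbar))
    {x d : ℝ} (hx : x ∈ Set.Icc 0 dbar) (hd : d ∈ Set.Icc 0 dbar) :
    U d - U x ≤ deriv U x * (d - x) := by
  rcases lt_trichotomy x d with h | h | h
  · obtain ⟨c, hc, hc'⟩ := exists_deriv_eq_slope U h
      (fun y hy => (hdiff y ⟨le_trans hx.1 hy.1, le_trans hy.2 hd.2⟩).continuousAt.continuousWithinAt)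
      (fun y hy => (hdiff y ⟨le_trans hx.1 hy.1.le, le_trans hy.2.le hd.2⟩).differentiableWithinAt)
    have hcmem : c ∈ Set.Icc 0 dbar := ⟨le_trans hx.1 hc.1.le, le_trans hc.2.le hd.2⟩
    have hlt : deriv U c < deriv U x := hanti hx hcmem hc.1
    have hdx : (0:ℝ) < d - x := by linarith
    rw [eq_div_iff (ne_of_gt hdx)] at hc'
    nlinarith [hc']
  · simp [h]
  · obtain ⟨c, hc, hc'⟩ := exists_deriv_eq_slope U h
      (fun y hy => (hdiff y ⟨le_trans hd.1 hy.1, le_trans hy.2 hx.2⟩).continuousAt.continuousWithinAt)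
      (fun y hy => (hdiff y ⟨le_trans hd.1 hy.1.le, le_trans hy.2.le hx.2⟩).differentiableWithinAt)
    have hcmem : c ∈ Set.Icc 0 dbar := ⟨le_trans hd.1 hc.1.le, le_trans hc.2.le hx.2⟩
    have hlt : deriv U x < deriv U c := hanti hcmem hx hc.2
    have hdx : (0:ℝ) < x - d := by linarith
    rw [eq_div_iff (ne_of_gt hdx)] at hc'
    nlinarith [hc']

/-- one-interval optimal consumption.  With `d⁺ = min(d̄,(U')⁻¹(π⁺))` and
`d⁻ = min(d̄,(U')⁻¹(π⁻))`, the maximizer of `U(d) − P(d − g)` over `[0, d̄]` is `d⁺` if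
`g ≤ d⁺`, `d⁻` if `g ≥ d⁻`, and `g` otherwise. -/
theorem single_interval_optimal
    (U : ℝ → ℝ) (dbar : ℝ) (hdbar : 0 < dbar)
    (hU : StrictConcaveOn ℝ (Set.Icc 0 dbar) U)
    (hdiff : ∀ d ∈ Set.Icc 0 dbar, DifferentiableAt ℝ U d)
    (hanti : StrictAntiOn (deriv U) (Set.Icc 0 dbar))
    (pb ps : ℝ) (hps : 0 ≤ ps) (hp : ps < pb)
    (qp qm : ℝ) (hqp : IsExtInv U dbar pb qp) (hqm : IsExtInv U dbar ps qm)
    (g : ℝ) (hg : 0 ≤ g) :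
    IsMaxOn (fun d => U d - nemP pb ps (d - g)) (Set.Icc 0 dbar)
      (if g ≤ min dbar qp then min dbar qp
       else if min dbar qm ≤ g then min dbar qm
       else g) := by
  have hminp : min dbar qp = qp := min_eq_right hqp.1.2
  have hminm : min dbar qm = qm := min_eq_right hqm.1.2
  rw [hminp, hminm]
  split_ifs with h1 h2
  · -- g ≤ qp : maximizer is qp
    rw [isMaxOn_iff]
    intro d hd
    have hgrad := grad_ineq hdiff hanti hqp.1 hd
    have hA : nemP pb ps (qp - g) = pb * (qp - g) := nemP_eq_pb (by linarith)
    have hB : pb * (d - g) ≤ nemP pb ps (d - g) := nemP_ge hp.le le_rfl (d - g)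
    have hsign : (deriv U qp - pb) * (d - qp) ≤ 0 := by
      rcases hqp.2 with he | ⟨h0, hlt⟩ | ⟨hdb, hgt⟩
      · rw [he, sub_self, zero_mul]
      · subst h0; nlinarith [hd.1]
      · subst hdb; nlinarith [hd.2]
    nlinarith [hgrad, hB, hsign]
  · -- qm ≤ g : maximizer is qm
    rw [isMaxOn_iff]
    intro d hd
    have hgrad := grad_ineq hdiff hanti hqm.1 hd
    have hA : nemP pb ps (qm - g) = ps * (qm - g) := nemP_eq_ps (by linarith)
    have hB : ps * (d - g) ≤ nemP pb ps (d - g) := nemP_ge le_rfl hp.le (d - g)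
    have hsign : (deriv U qm - ps) * (d - qm) ≤ 0 := by
      rcases hqm.2 with he | ⟨h0, hlt⟩ | ⟨hdb, hgt⟩
      · rw [he, sub_self, zero_mul]
      · subst h0; nlinarith [hd.1]
      · subst hdb; nlinarith [hd.2]
    nlinarith [hgrad, hB, hsign]
  · -- qp < g < qm : maximizer is g
    push_neg at h1 h2
    have hgmem : g ∈ Set.Icc 0 dbar := ⟨hg, le_trans h2.le hqm.1.2⟩
    rw [isMaxOn_iff]
    intro d hd
    have hgrad := grad_ineq hdiff hanti hgmem hd
    have hub : deriv U g ≤ pb := by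
      have hlt : deriv U g < deriv U qp := hanti hqp.1 hgmem h1
      rcases hqp.2 with he | ⟨h0, hlt0⟩ | ⟨hdb, hgt⟩
      · linarith
      · subst h0; linarith
      · subst hdb; linarith [hgmem.2]
    have hlb : ps ≤ deriv U g := by
      have hlt : deriv U qm < deriv U g := hanti hgmem hqm.1 h2
      rcases hqm.2 with he | ⟨h0, hlt0⟩ | ⟨hdb, hgt⟩
      · linarith
      · subst h0; linarith
      · subst hdb; linarith
    have hB : deriv U g * (d - g) ≤ nemP pb ps (d - g) := nemP_ge hlb hub (d - g)
    have hz : nemP pb ps (g - g) = 0 := by simp [nemP]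
    linarith [hgrad, hB]
end

section
/- The single-interval optimal surplus S(g) = max_{0≤d≤d̄} [U(d) − P(d − g)] is a concave, nondecreasing function of g, with slope π⁺ for g < d⁺ and slope π⁻ for g > d⁻. -/
/-- The single-interval optimal surplus `S(g)`. -/
noncomputable def surplus (U : ℝ → ℝ) (dbar pb ps g : ℝ) : ℝ :=
  sSup ((fun d => U d - nemP pb ps (d - g)) '' Set.Icc 0 dbar)

lemma nemP_eq_max {pb ps : ℝ} (hps : 0 ≤ ps) (hp : ps ≤ pb) (z : ℝ) :
    nemP pb ps z = max (pb * z) (ps * z) := by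
  unfold nemP
  rcases le_total 0 z with h | h
  · rw [max_eq_left h, max_eq_right (by linarith : -z ≤ 0),
      max_eq_left (by nlinarith : ps * z ≤ pb * z)]
    ring
  · rw [max_eq_right h, max_eq_left (by linarith : (0:ℝ) ≤ -z),
      max_eq_right (by nlinarith : pb * z ≤ ps * z)]
    ring

lemma nemP_continuous (pb ps : ℝ) : Continuous (nemP pb ps) := by
  unfold nemP; fun_prop

lemma nemP_mono {pb ps : ℝ} (hps : 0 ≤ ps) (hp : ps ≤ pb) : Monotone (nemP pb ps) := by
  intro z₁ z₂ h
  rw [nemP_eq_max hps hp, nemP_eq_max hps hp]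
  have hpb : 0 ≤ pb := hps.trans hp
  exact max_le_max (by nlinarith) (by nlinarith)

lemma tangent {U : ℝ → ℝ} {dbar : ℝ}
    (hcont : ContinuousOn U (Set.Icc 0 dbar))
    (hdiff : ∀ d ∈ Set.Icc 0 dbar, DifferentiableAt ℝ U d)
    (hanti : StrictAntiOn (deriv U) (Set.Icc 0 dbar))
    {π q : ℝ} (hq : IsExtInv U dbar π q) :
    ∀ d ∈ Set.Icc 0 dbar, π * (q - d) ≤ U q - U d := by
  obtain ⟨⟨hq0, hqd⟩, hcase⟩ := hq
  intro d hd
  obtain ⟨hd0, hdd⟩ := hd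
  rcases lt_trichotomy d q with hlt | heq | hgt
  · obtain ⟨c, hc, hceq⟩ := exists_hasDerivAt_eq_slope U (deriv U) hlt
      (hcont.mono (Set.Icc_subset_Icc hd0 hqd))
      (fun x hx => (hdiff x ⟨hd0.trans hx.1.le, hx.2.le.trans hqd⟩).hasDerivAt)
    have hcIcc : c ∈ Set.Icc 0 dbar := ⟨hd0.trans hc.1.le, hc.2.le.trans hqd⟩
    have hπc : π ≤ deriv U c := by
      rcases hcase with h | ⟨h0, _⟩ | ⟨hdb, hlt'⟩
      · have := hanti hcIcc ⟨hq0, hqd⟩ hc.2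
        linarith
      · subst h0; linarith
      · have := hanti hcIcc ⟨hq0, hqd⟩ hc.2
        rw [hdb] at *
        linarith
    rw [hceq] at hπc
    have hpos : (0:ℝ) < q - d := sub_pos.mpr hlt
    calc π * (q - d) ≤ ((U q - U d) / (q - d)) * (q - d) :=
          mul_le_mul_of_nonneg_right hπc hpos.le
      _ = U q - U d := by field_simp
  · subst heq; simp
  · obtain ⟨c, hc, hceq⟩ := exists_hasDerivAt_eq_slope U (deriv U) hgt
      (hcont.mono (Set.Icc_subset_Icc hq0 hdd))
      (fun x hx => (hdiff x ⟨hq0.trans hx.1.le, hx.2.le.trans hdd⟩).hasDerivAt)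
    have hcIcc : c ∈ Set.Icc 0 dbar := ⟨hq0.trans hc.1.le, hc.2.le.trans hdd⟩
    have hπc : deriv U c ≤ π := by
      rcases hcase with h | ⟨h0, hlt'⟩ | ⟨hdb, _⟩
      · have := hanti ⟨hq0, hqd⟩ hcIcc hc.1
        linarith
      · have := hanti ⟨hq0, hqd⟩ hcIcc hc.1
        rw [h0] at *
        linarith
      · subst hdb; linarith
    rw [hceq] at hπc
    have hpos : (0:ℝ) < d - q := sub_pos.mpr hgt
    have : U d - U q ≤ π * (d - q) := by
      calc U d - U q = ((U d - U q) / (d - q)) * (d - q) := by field_simp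
        _ ≤ π * (d - q) := mul_le_mul_of_nonneg_right hπc hpos.le
    nlinarith

lemma surplus_eq {U : ℝ → ℝ} {dbar pb ps : ℝ}
    {π q g : ℝ}
    (htan : ∀ d ∈ Set.Icc 0 dbar, π * (q - d) ≤ U q - U d)
    (hqmem : q ∈ Set.Icc 0 dbar)
    (hle : ∀ z, π * z ≤ nemP pb ps z)
    (heq : nemP pb ps (q - g) = π * (q - g)) :
    surplus U dbar pb ps g = U q - π * (q - g) := by
  unfold surplus
  rw [← heq]
  apply IsGreatest.csSup_eq
  constructor
  · exact ⟨q, hqmem, rfl⟩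
  · rintro y ⟨d, hd, rfl⟩
    have h1 := htan d hd
    have h2 := hle (d - g)
    have h3 : π * (q - d) + π * (d - g) = π * (q - g) := by ring
    show U d - nemP pb ps (d - g) ≤ U q - nemP pb ps (q - g)
    rw [heq]
    linarith

/-- the optimal surplus `S(g)` is concave and nondecreasing in `g`, with
slope `π⁺` for `g < d⁺` and slope `π⁻` for `g > d⁻`. -/
theorem surplus_concave_monotone_slopes
    (U : ℝ → ℝ) (dbar : ℝ) (hdbar : 0 < dbar)
    (hU : ConcaveOn ℝ (Set.Icc 0 dbar) U)
    (hcont : ContinuousOn U (Set.Icc 0 dbar))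
    (hdiff : ∀ d ∈ Set.Icc 0 dbar, DifferentiableAt ℝ U d)
    (hanti : StrictAntiOn (deriv U) (Set.Icc 0 dbar))
    (pb ps : ℝ) (hps : 0 ≤ ps) (hp : ps < pb)
    (qp qm : ℝ) (hqp : IsExtInv U dbar pb qp) (hqm : IsExtInv U dbar ps qm) :
    ConcaveOn ℝ (Set.Ici 0) (surplus U dbar pb ps) ∧
    MonotoneOn (surplus U dbar pb ps) (Set.Ici 0) ∧
    (∀ g₁ g₂, 0 ≤ g₁ → g₁ ≤ g₂ → g₂ ≤ min dbar qp →
      surplus U dbar pb ps g₂ - surplus U dbar pb ps g₁ = pb * (g₂ - g₁)) ∧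
    (∀ g₁ g₂, min dbar qm ≤ g₁ → g₁ ≤ g₂ →
      surplus U dbar pb ps g₂ - surplus U dbar pb ps g₁ = ps * (g₂ - g₁)) := by
  have hpb : 0 ≤ pb := hps.trans hp.le
  have hfcont : ∀ g : ℝ, ContinuousOn (fun d => U d - nemP pb ps (d - g)) (Set.Icc 0 dbar) := by
    intro g
    exact hcont.sub ((nemP_continuous pb ps).comp_continuousOn (by fun_prop))
  have hcompact : ∀ g : ℝ, IsCompact ((fun d => U d - nemP pb ps (d - g)) '' Set.Icc 0 dbar) :=
    fun g => isCompact_Icc.image_of_continuousOn (hfcont g)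
  have hne : ∀ g : ℝ, ((fun d => U d - nemP pb ps (d - g)) '' Set.Icc 0 dbar).Nonempty :=
    fun g => ⟨_, ⟨0, ⟨le_refl 0, hdbar.le⟩, rfl⟩⟩
  have hbdd : ∀ g : ℝ, BddAbove ((fun d => U d - nemP pb ps (d - g)) '' Set.Icc 0 dbar) :=
    fun g => (hcompact g).bddAbove
  have hatt : ∀ g : ℝ, ∃ d ∈ Set.Icc 0 dbar,
      surplus U dbar pb ps g = U d - nemP pb ps (d - g) := by
    intro g
    obtain ⟨d, hd, hval⟩ := (hcompact g).sSup_mem (hne g)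
    exact ⟨d, hd, hval.symm⟩
  refine ⟨?_, ?_, ?_, ?_⟩
  · refine ⟨convex_Ici 0, fun g₁ hg₁ g₂ hg₂ a b ha hb hab => ?_⟩
    obtain ⟨d₁, hd₁, he₁⟩ := hatt g₁
    obtain ⟨d₂, hd₂, he₂⟩ := hatt g₂
    have hdmem : a • d₁ + b • d₂ ∈ Set.Icc 0 dbar := (convex_Icc 0 dbar) hd₁ hd₂ ha hb hab
    have hUc := hU.2 hd₁ hd₂ ha hb hab
    simp only [smul_eq_mul] at hUc hdmem ⊢
    have hz : nemP pb ps (a * d₁ + b * d₂ - (a * g₁ + b * g₂)) ≤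
        a * nemP pb ps (d₁ - g₁) + b * nemP pb ps (d₂ - g₂) := by
      rw [nemP_eq_max hps hp.le, nemP_eq_max hps hp.le, nemP_eq_max hps hp.le]
      apply max_le
      · have h1 := mul_le_mul_of_nonneg_left (le_max_left (pb*(d₁-g₁)) (ps*(d₁-g₁))) ha
        have h2 := mul_le_mul_of_nonneg_left (le_max_left (pb*(d₂-g₂)) (ps*(d₂-g₂))) hb
        have hexp : pb * (a * d₁ + b * d₂ - (a * g₁ + b * g₂)) =
            a * (pb * (d₁ - g₁)) + b * (pb * (d₂ - g₂)) := by ring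
        linarith
      · have h1 := mul_le_mul_of_nonneg_left (le_max_right (pb*(d₁-g₁)) (ps*(d₁-g₁))) ha
        have h2 := mul_le_mul_of_nonneg_left (le_max_right (pb*(d₂-g₂)) (ps*(d₂-g₂))) hb
        have hexp : ps * (a * d₁ + b * d₂ - (a * g₁ + b * g₂)) =
            a * (ps * (d₁ - g₁)) + b * (ps * (d₂ - g₂)) := by ring
        linarith
    have hle1 : U (a * d₁ + b * d₂) - nemP pb ps (a * d₁ + b * d₂ - (a * g₁ + b * g₂)) ≤
        surplus U dbar pb ps (a * g₁ + b * g₂) :=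
      le_csSup (hbdd _) ⟨_, hdmem, rfl⟩
    rw [he₁, he₂]
    have hexp2 : a * (U d₁ - nemP pb ps (d₁ - g₁)) + b * (U d₂ - nemP pb ps (d₂ - g₂)) =
        (a * U d₁ + b * U d₂) - (a * nemP pb ps (d₁ - g₁) + b * nemP pb ps (d₂ - g₂)) := by
      ring
    linarith
  · intro g₁ hg₁ g₂ hg₂ h12
    apply csSup_le (hne g₁)
    rintro y ⟨d, hd, rfl⟩
    refine le_trans ?_ (le_csSup (hbdd g₂) ⟨d, hd, rfl⟩)
    have := nemP_mono hps hp.le (show d - g₂ ≤ d - g₁ by linarith)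
    show U d - nemP pb ps (d - g₁) ≤ U d - nemP pb ps (d - g₂)
    linarith
  · intro g₁ g₂ hg₁ h12 hg₂
    rw [min_eq_right hqp.1.2] at hg₂
    have htan := tangent hcont hdiff hanti hqp
    have hsur : ∀ g, g ≤ qp → surplus U dbar pb ps g = U qp - pb * (qp - g) := by
      intro g hgq
      apply surplus_eq htan hqp.1
      · intro z; rw [nemP_eq_max hps hp.le]; exact le_max_left _ _
      · rw [nemP_eq_max hps hp.le, max_eq_left (by nlinarith : ps * (qp - g) ≤ pb * (qp - g))]
    rw [hsur g₁ (h12.trans hg₂), hsur g₂ hg₂]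
    ring
  · intro g₁ g₂ hg₁ h12
    rw [min_eq_right hqm.1.2] at hg₁
    have htan := tangent hcont hdiff hanti hqm
    have hsur : ∀ g, qm ≤ g → surplus U dbar pb ps g = U qm - ps * (qm - g) := by
      intro g hgq
      apply surplus_eq htan hqm.1
      · intro z; rw [nemP_eq_max hps hp.le]; exact le_max_right _ _
      · rw [nemP_eq_max hps hp.le, max_eq_right (by nlinarith : pb * (qm - g) ≤ ps * (qm - g))]
    rw [hsur g₁ hg₁, hsur g₂ (hg₁.trans h12)]
    ring
end

section
/- If the aggregate optimal demand under buying price, d⁺ = Σ_i min(d̄_i,(U_i')⁻¹(π⁺)), and under selling price, d⁻ = Σ_i min(d̄_i,(U_i')⁻¹(π⁻)), satisfy d⁺ ≤ g ≤ d⁻, then the optimal solution of max Σ U_i(d_i) − P(Σ d_i − g) over 0 ≤ d_i ≤ d̄_i has net consumption exactly zero: Σ d_i* = g. -/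
lemma nemP_of_nonpos {pb ps z : ℝ} (hz : z ≤ 0) : nemP pb ps z = ps * z := by
  unfold nemP
  rw [max_eq_right hz, max_eq_left (neg_nonneg.2 hz)]
  ring

lemma nemP_of_nonneg {pb ps z : ℝ} (hz : 0 ≤ z) : nemP pb ps z = pb * z := by
  unfold nemP
  rw [max_eq_left hz, max_eq_right (neg_nonpos.2 hz)]
  ring

/-- if `d⁺ ≤ g ≤ d⁻`, every maximizer of `∑ U_i(d_i) − P(∑ d_i − g)` over
the box has net consumption exactly zero: `∑ d_i* = g`. -/
theorem net_zero_zone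
    (K : ℕ) (U : Fin K → ℝ → ℝ) (dbar : Fin K → ℝ) (hdbar : ∀ i, 0 < dbar i)
    (hU : ∀ i, StrictConcaveOn ℝ (Set.Icc 0 (dbar i)) (U i))
    (hdiff : ∀ i, ∀ d ∈ Set.Icc 0 (dbar i), DifferentiableAt ℝ (U i) d)
    (hanti : ∀ i, StrictAntiOn (deriv (U i)) (Set.Icc 0 (dbar i)))
    (pb ps : ℝ) (hps : 0 ≤ ps) (hp : ps < pb)
    (qp qm : Fin K → ℝ)
    (hqp : ∀ i, IsExtInv (U i) (dbar i) pb (qp i))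
    (hqm : ∀ i, IsExtInv (U i) (dbar i) ps (qm i))
    (g : ℝ) (hg1 : ∑ i, min (dbar i) (qp i) ≤ g) (hg2 : g ≤ ∑ i, min (dbar i) (qm i))
    (dstar : Fin K → ℝ) (hbox : ∀ i, dstar i ∈ Set.Icc 0 (dbar i))
    (hopt : IsMaxOn (fun d : Fin K → ℝ => (∑ i, U i (d i)) - nemP pb ps ((∑ i, d i) - g))
      {d | ∀ i, d i ∈ Set.Icc 0 (dbar i)} dstar) :
    ∑ i, dstar i = g := by
  by_contra hne
  rcases lt_or_gt_of_ne hne with hlt | hgt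
  · -- ∑ dstar < g : increase some coordinate with dstar i < qm i
    have hminm : ∑ i, min (dbar i) (qm i) = ∑ i, qm i :=
      Finset.sum_congr rfl fun i _ => min_eq_right (hqm i).1.2
    have hsum : ∑ i, dstar i < ∑ i, qm i := by
      rw [← hminm]; linarith
    obtain ⟨i, -, hi⟩ := Finset.exists_lt_of_sum_lt hsum
    set x := dstar i with hx
    set ε := min (qm i - x) (g - ∑ j, dstar j) with hεdef
    have hε0 : 0 < ε := lt_min (by linarith) (by linarith)
    have hε1 : ε ≤ qm i - x := min_le_left _ _
    have hε2 : ε ≤ g - ∑ j, dstar j := min_le_right _ _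
    have hx0 : 0 ≤ x := (hbox i).1
    have hxεd : x + ε ≤ dbar i := by
      have := (hqm i).1.2; linarith
    -- mean value theorem on [x, x+ε]
    have hIcc : Set.Icc x (x + ε) ⊆ Set.Icc 0 (dbar i) := by
      intro y hy; exact ⟨le_trans hx0 hy.1, le_trans hy.2 hxεd⟩
    obtain ⟨c, hc, hcval⟩ := exists_deriv_eq_slope (U i) (by linarith : x < x + ε)
      (fun y hy => ((hdiff i y (hIcc hy)).continuousAt).continuousWithinAt)
      (fun y hy => ((hdiff i y (hIcc (Set.Ioo_subset_Icc_self hy))).differentiableWithinAt))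
    have hcmem : c ∈ Set.Icc 0 (dbar i) := hIcc (Set.Ioo_subset_Icc_self hc)
    -- deriv U i c > ps
    have hcqm : c < qm i := lt_of_lt_of_le hc.2 (by linarith)
    have hderiv_c : ps < deriv (U i) c := by
      rcases (hqm i).2 with h | ⟨h0, _⟩ | ⟨_, hd⟩
      · exact h ▸ hanti i hcmem (hqm i).1 hcqm
      · exfalso; rw [h0] at hi; linarith
      · calc ps < deriv (U i) (dbar i) := hd
          _ ≤ deriv (U i) c := by
              rcases eq_or_lt_of_le (hcmem.2) with h | h
              · rw [h]
              · exact le_of_lt ((hanti i) hcmem ⟨le_of_lt (hdbar i), le_refl _⟩ h)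
    have hslope : U i (x + ε) - U i x = deriv (U i) c * ε := by
      have he : x + ε - x = ε := by ring
      rw [he] at hcval
      rw [hcval, div_mul_cancel₀ _ (ne_of_gt hε0)]
    -- build the perturbed point
    set d' := Function.update dstar i (x + ε) with hd'
    have hbox' : d' ∈ {d : Fin K → ℝ | ∀ j, d j ∈ Set.Icc 0 (dbar j)} := by
      intro j
      by_cases hj : j = i
      · subst hj
        rw [hd']
        simp only [Function.update_self, Set.mem_Icc]
        exact ⟨by linarith, hxεd⟩
      · simp [hd', Function.update_of_ne hj]; exact ⟨(hbox j).1, (hbox j).2⟩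
    have hsum' : ∑ j, d' j = (∑ j, dstar j) + ε := by
      rw [hd', Finset.sum_update_of_mem (Finset.mem_univ i),
        ← Finset.add_sum_erase _ dstar (Finset.mem_univ i), Finset.erase_eq]
      ring
    have hUsum' : ∑ j, U j (d' j) = (∑ j, U j (dstar j)) + (U i (x + ε) - U i x) := by
      rw [hd']
      rw [show (∑ j, U j (Function.update dstar i (x + ε) j))
          = U i (x + ε) + ∑ j ∈ Finset.univ.erase i, U j (dstar j) by
        rw [← Finset.add_sum_erase _ (fun j => U j (Function.update dstar i (x + ε) j))
          (Finset.mem_univ i), Function.update_self]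
        congr 1
        exact Finset.sum_congr rfl fun j hj => by
          rw [Function.update_of_ne (Finset.ne_of_mem_erase hj)]]
      rw [← Finset.add_sum_erase _ (fun j => U j (dstar j)) (Finset.mem_univ i)]
      ring
    have hle := hopt hbox'
    simp only [Set.mem_setOf_eq] at hle
    rw [hsum', hUsum'] at hle
    rw [nemP_of_nonpos (by linarith : (∑ j, dstar j) - g ≤ 0),
      nemP_of_nonpos (by linarith : (∑ j, dstar j) + ε - g ≤ 0)] at hle
    nlinarith [hslope, hderiv_c, hε0]
  · -- ∑ dstar > g : decrease some coordinate with dstar i > qp i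
    have hminp : ∑ i, min (dbar i) (qp i) = ∑ i, qp i :=
      Finset.sum_congr rfl fun i _ => min_eq_right (hqp i).1.2
    have hsum : ∑ i, qp i < ∑ i, dstar i := by
      rw [← hminp]; linarith
    obtain ⟨i, -, hi⟩ := Finset.exists_lt_of_sum_lt hsum
    set x := dstar i with hx
    set ε := min (x - qp i) ((∑ j, dstar j) - g) with hεdef
    have hε0 : 0 < ε := lt_min (by linarith) (by linarith)
    have hε1 : ε ≤ x - qp i := min_le_left _ _
    have hε2 : ε ≤ (∑ j, dstar j) - g := min_le_right _ _
    have hxd : x ≤ dbar i := (hbox i).2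
    have hxε0 : 0 ≤ x - ε := by
      have := (hqp i).1.1; linarith
    -- mean value theorem on [x-ε, x]
    have hIcc : Set.Icc (x - ε) x ⊆ Set.Icc 0 (dbar i) := by
      intro y hy; exact ⟨le_trans hxε0 hy.1, le_trans hy.2 hxd⟩
    obtain ⟨c, hc, hcval⟩ := exists_deriv_eq_slope (U i) (by linarith : x - ε < x)
      (fun y hy => ((hdiff i y (hIcc hy)).continuousAt).continuousWithinAt)
      (fun y hy => ((hdiff i y (hIcc (Set.Ioo_subset_Icc_self hy))).differentiableWithinAt))
    have hcmem : c ∈ Set.Icc 0 (dbar i) := hIcc (Set.Ioo_subset_Icc_self hc)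
    -- deriv U i c < pb
    have hcqp : qp i < c := lt_of_le_of_lt (by linarith) hc.1
    have hderiv_c : deriv (U i) c < pb := by
      rcases (hqp i).2 with h | ⟨_, h0⟩ | ⟨hd, hd'⟩
      · exact h ▸ hanti i (hqp i).1 hcmem hcqp
      · calc deriv (U i) c ≤ deriv (U i) 0 := by
              rcases eq_or_lt_of_le (hcmem.1) with h | h
              · rw [← h]
              · exact le_of_lt ((hanti i) ⟨le_refl _, le_of_lt (hdbar i)⟩ hcmem h)
          _ < pb := h0
      · exfalso; rw [hd] at hi; linarith [hcmem.2, hc.2, hxd]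
    have hslope : U i x - U i (x - ε) = deriv (U i) c * ε := by
      have he : x - (x - ε) = ε := by ring
      rw [he] at hcval
      rw [hcval, div_mul_cancel₀ _ (ne_of_gt hε0)]
    -- build the perturbed point
    set d' := Function.update dstar i (x - ε) with hd'
    have hbox' : d' ∈ {d : Fin K → ℝ | ∀ j, d j ∈ Set.Icc 0 (dbar j)} := by
      intro j
      by_cases hj : j = i
      · subst hj
        rw [hd']
        simp only [Function.update_self, Set.mem_Icc]
        exact ⟨hxε0, by linarith⟩
      · simp [hd', Function.update_of_ne hj]; exact ⟨(hbox j).1, (hbox j).2⟩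
    have hsum' : ∑ j, d' j = (∑ j, dstar j) - ε := by
      rw [hd', Finset.sum_update_of_mem (Finset.mem_univ i),
        ← Finset.add_sum_erase _ dstar (Finset.mem_univ i), Finset.erase_eq]
      ring
    have hUsum' : ∑ j, U j (d' j) = (∑ j, U j (dstar j)) - (U i x - U i (x - ε)) := by
      rw [hd']
      rw [show (∑ j, U j (Function.update dstar i (x - ε) j))
          = U i (x - ε) + ∑ j ∈ Finset.univ.erase i, U j (dstar j) by
        rw [← Finset.add_sum_erase _ (fun j => U j (Function.update dstar i (x - ε) j))
          (Finset.mem_univ i), Function.update_self]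
        congr 1
        exact Finset.sum_congr rfl fun j hj => by
          rw [Function.update_of_ne (Finset.ne_of_mem_erase hj)]]
      rw [← Finset.add_sum_erase _ (fun j => U j (dstar j)) (Finset.mem_univ i)]
      ring
    have hle := hopt hbox'
    simp only [Set.mem_setOf_eq] at hle
    rw [hsum', hUsum'] at hle
    rw [nemP_of_nonneg (by linarith : 0 ≤ (∑ j, dstar j) - g),
      nemP_of_nonneg (by linarith : 0 ≤ (∑ j, dstar j) - ε - g)] at hle
    nlinarith [hslope, hderiv_c, hε0]
end

section
/- If g < d⁺ = Σ_i min(d̄_i,(U_i')⁻¹(π⁺)), then the optimal solution of max Σ U_i(d_i) − P(Σ d_i − g) is d_i* = min(d̄_i,(U_i')⁻¹(π⁺)) for each i, independent of g, and the household is a net consumer (Σ d_i* − g > 0). -/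
lemma key_max (U : ℝ → ℝ) (dbar : ℝ)
    (hdiff : ∀ d ∈ Set.Icc 0 dbar, DifferentiableAt ℝ U d)
    (hanti : StrictAntiOn (deriv U) (Set.Icc 0 dbar))
    (pb q : ℝ) (hq : IsExtInv U dbar pb q)
    (d : ℝ) (hd : d ∈ Set.Icc 0 dbar) :
    U d - pb * d ≤ U q - pb * q := by
  obtain ⟨⟨hq0, hqd⟩, hcase⟩ := hq
  obtain ⟨hd0, hdd⟩ := hd
  rcases lt_trichotomy d q with h | h | h
  · -- d < q : use MVT on [d,q]
    have hsub : Set.Icc d q ⊆ Set.Icc 0 dbar := Set.Icc_subset_Icc hd0 hqd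
    have hcont : ContinuousOn U (Set.Icc d q) := fun x hx =>
      ((hdiff x (hsub hx)).continuousAt).continuousWithinAt
    have hdif : DifferentiableOn ℝ U (Set.Ioo d q) := fun x hx =>
      (hdiff x (hsub (Set.Ioo_subset_Icc_self hx))).differentiableWithinAt
    obtain ⟨c, hc, hceq⟩ := exists_deriv_eq_slope U h hcont hdif
    have hcmem : c ∈ Set.Icc 0 dbar := hsub (Set.Ioo_subset_Icc_self hc)
    have hqpb : pb ≤ deriv U q := by
      rcases hcase with h1 | ⟨h2, _⟩ | h3
      · exact h1.ge
      · exact absurd (h2 ▸ h) (not_lt.mpr hd0)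
      · rw [h3.1]; exact h3.2.le
    have : pb < deriv U c := lt_of_le_of_lt hqpb (hanti hcmem ⟨hq0, hqd⟩ hc.2)
    have hslope : pb < (U q - U d) / (q - d) := hceq ▸ this
    have hqd' : 0 < q - d := sub_pos.mpr h
    nlinarith [(lt_div_iff₀ hqd').mp hslope]
  · simp [h]
  · -- q < d
    have hsub : Set.Icc q d ⊆ Set.Icc 0 dbar := Set.Icc_subset_Icc hq0 hdd
    have hcont : ContinuousOn U (Set.Icc q d) := fun x hx =>
      ((hdiff x (hsub hx)).continuousAt).continuousWithinAt
    have hdif : DifferentiableOn ℝ U (Set.Ioo q d) := fun x hx =>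
      (hdiff x (hsub (Set.Ioo_subset_Icc_self hx))).differentiableWithinAt
    obtain ⟨c, hc, hceq⟩ := exists_deriv_eq_slope U h hcont hdif
    have hcmem : c ∈ Set.Icc 0 dbar := hsub (Set.Ioo_subset_Icc_self hc)
    have hqpb : deriv U q ≤ pb := by
      rcases hcase with h1 | h2 | h3
      · exact h1.le
      · rw [h2.1]; exact h2.2.le
      · exact absurd (h3.1 ▸ h) (not_lt.mpr hdd)
    have : deriv U c < pb := lt_of_lt_of_le (hanti ⟨hq0, hqd⟩ hcmem hc.1) hqpb
    have hslope : (U d - U q) / (d - q) < pb := hceq ▸ this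
    have hdq' : 0 < d - q := sub_pos.mpr h
    nlinarith [(div_lt_iff₀ hdq').mp hslope]

/-- if `g < d⁺ = ∑ min(d̄_i,(U_i')⁻¹(π⁺))`, then
`d_i* = min(d̄_i,(U_i')⁻¹(π⁺))` (independent of `g`) maximizes
`∑ U_i(d_i) − P(∑ d_i − g)` and the household is a net consumer. -/
theorem net_consuming_zone
    (K : ℕ) (U : Fin K → ℝ → ℝ) (dbar : Fin K → ℝ) (hdbar : ∀ i, 0 < dbar i)
    (hU : ∀ i, StrictConcaveOn ℝ (Set.Icc 0 (dbar i)) (U i))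
    (hdiff : ∀ i, ∀ d ∈ Set.Icc 0 (dbar i), DifferentiableAt ℝ (U i) d)
    (hanti : ∀ i, StrictAntiOn (deriv (U i)) (Set.Icc 0 (dbar i)))
    (pb ps : ℝ) (hps : 0 ≤ ps) (hp : ps < pb)
    (qp : Fin K → ℝ) (hqp : ∀ i, IsExtInv (U i) (dbar i) pb (qp i))
    (g : ℝ) (hg : g < ∑ i, min (dbar i) (qp i)) :
    IsMaxOn (fun d : Fin K → ℝ => (∑ i, U i (d i)) - nemP pb ps ((∑ i, d i) - g))
      {d | ∀ i, d i ∈ Set.Icc 0 (dbar i)} (fun i => min (dbar i) (qp i)) ∧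
    0 < (∑ i, min (dbar i) (qp i)) - g := by
  have hmin : ∀ i, min (dbar i) (qp i) = qp i := fun i => min_eq_right (hqp i).1.2
  have hpos : 0 < (∑ i, min (dbar i) (qp i)) - g := sub_pos.mpr hg
  refine ⟨?_, hpos⟩
  rw [isMaxOn_iff]
  intro d hd
  simp only [Set.mem_setOf_eq] at hd
  -- nemP ≥ pb * z for all z
  have hnem : ∀ z : ℝ, pb * z ≤ nemP pb ps z := by
    intro z
    unfold nemP
    rcases le_or_gt 0 z with h | h
    · rw [max_eq_left h, max_eq_right (by linarith : -z ≤ 0)]; ring_nf; linarith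
    · rw [max_eq_right h.le, max_eq_left (by linarith : 0 ≤ -z)]
      nlinarith
  -- nemP at the positive point
  have hz : (0:ℝ) < (∑ i, min (dbar i) (qp i)) - g := hpos
  have hnem2 : nemP pb ps ((∑ i, min (dbar i) (qp i)) - g)
      = pb * ((∑ i, min (dbar i) (qp i)) - g) := by
    unfold nemP
    rw [max_eq_left hz.le, max_eq_right (by linarith : -((∑ i, min (dbar i) (qp i)) - g) ≤ 0)]
    ring
  have hsum : ∑ i, (U i (d i) - pb * d i)
      ≤ ∑ i, (U i (min (dbar i) (qp i)) - pb * min (dbar i) (qp i)) := by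
    apply Finset.sum_le_sum
    intro i _
    rw [hmin i]
    exact key_max (U i) (dbar i) (hdiff i) (hanti i) pb (qp i) (hqp i) (d i) (hd i)
  simp only [Finset.sum_sub_distrib, ← Finset.mul_sum] at hsum
  have h1 : (∑ i, U i (d i)) - nemP pb ps ((∑ i, d i) - g)
      ≤ (∑ i, U i (d i)) - pb * ((∑ i, d i) - g) := by
    linarith [hnem ((∑ i, d i) - g)]
  calc (∑ i, U i (d i)) - nemP pb ps ((∑ i, d i) - g)
      ≤ (∑ i, U i (d i)) - pb * ((∑ i, d i) - g) := h1
    _ ≤ (∑ i, U i (min (dbar i) (qp i))) - pb * ((∑ i, min (dbar i) (qp i)) - g) := by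
        ring_nf; ring_nf at hsum; linarith
    _ = (∑ i, U i (min (dbar i) (qp i)))
        - nemP pb ps ((∑ i, min (dbar i) (qp i)) - g) := by rw [hnem2]
end

section
/- If V : [0,∞) → ℝ is convex and nonincreasing, then for any g, v̄ ≥ 0 and prices π⁺ > π⁻ ≥ 0, the function y ↦ min_{0 ≤ v ≤ min(v̄,y)} [P(v − g) + V(y − v)] is convex in y on [0,∞). -/
/-- DP convexity preservation.  If `V` is convex and nonincreasing on
`[0,∞)`, then `y ↦ min_{0 ≤ v ≤ min(v̄,y)} [P(v − g) + V(y − v)]` is convex on `[0,∞)`. -/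
theorem dp_step_convex (pb ps : ℝ) (hps : 0 ≤ ps) (hp : ps < pb)
    (V : ℝ → ℝ) (hVconv : ConvexOn ℝ (Set.Ici 0) V) (hVanti : AntitoneOn V (Set.Ici 0))
    (g vbar : ℝ) (hg : 0 ≤ g) (hvbar : 0 ≤ vbar) :
    ConvexOn ℝ (Set.Ici 0)
      (fun y => sInf ((fun v => nemP pb ps (v - g) + V (y - v)) ''
        Set.Icc 0 (min vbar y))) := by
  set S : ℝ → Set ℝ :=
    fun y => (fun v => nemP pb ps (v - g) + V (y - v)) '' Set.Icc 0 (min vbar y) with hS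
  have hSne : ∀ {yy : ℝ}, 0 ≤ yy → (S yy).Nonempty := by
    intro yy hyy
    exact ⟨_, ⟨0, ⟨le_refl 0, le_min hvbar hyy⟩, rfl⟩⟩
  have hbdd : ∀ yy : ℝ, 0 ≤ yy → ∀ x ∈ S yy, V yy - ps * g ≤ x := by
    rintro yy hyy x ⟨v, ⟨hv0, hvm⟩, rfl⟩
    have hvy : v ≤ yy := le_trans hvm (min_le_right _ _)
    have h1 : V yy ≤ V (yy - v) :=
      hVanti (Set.mem_Ici.mpr (by linarith)) (Set.mem_Ici.mpr hyy) (by linarith)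
    have h2 : -(ps * g) ≤ nemP pb ps (v - g) := by
      rw [nemP_eq_max hps hp.le]
      have h3 : ps * (v - g) ≤ max (pb * (v - g)) (ps * (v - g)) := le_max_right _ _
      nlinarith
    simp only
    linarith
  refine ⟨convex_Ici 0, ?_⟩
  intro y₁ hy₁ y₂ hy₂ a b ha hb hab
  simp only [smul_eq_mul]
  set y := a * y₁ + b * y₂ with hy
  have hy0 : (0:ℝ) ≤ y := by
    have := Set.mem_Ici.mp hy₁
    have := Set.mem_Ici.mp hy₂
    positivity
  have hBB : BddBelow (S y) := ⟨V y - ps * g, fun x hx => hbdd y hy0 x hx⟩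
  have key : ∀ x₁ ∈ S y₁, ∀ x₂ ∈ S y₂, sInf (S y) ≤ a * x₁ + b * x₂ := by
    rintro x₁ ⟨v₁, ⟨hv₁0, hv₁m⟩, rfl⟩ x₂ ⟨v₂, ⟨hv₂0, hv₂m⟩, rfl⟩
    have hv₁vb : v₁ ≤ vbar := le_trans hv₁m (min_le_left _ _)
    have hv₂vb : v₂ ≤ vbar := le_trans hv₂m (min_le_left _ _)
    have hv₁y : v₁ ≤ y₁ := le_trans hv₁m (min_le_right _ _)
    have hv₂y : v₂ ≤ y₂ := le_trans hv₂m (min_le_right _ _)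
    set v := a * v₁ + b * v₂ with hv
    have hvmem : v ∈ Set.Icc 0 (min vbar y) := by
      constructor
      · positivity
      · refine le_min ?_ ?_
        · nlinarith
        · rw [hy, hv]; nlinarith
    have hle : sInf (S y) ≤ nemP pb ps (v - g) + V (y - v) :=
      csInf_le hBB ⟨v, hvmem, rfl⟩
    -- bound the nemP part
    have hP : nemP pb ps (v - g) ≤
        a * nemP pb ps (v₁ - g) + b * nemP pb ps (v₂ - g) := by
      rw [nemP_eq_max hps hp.le, nemP_eq_max hps hp.le, nemP_eq_max hps hp.le]
      apply max_le
      · have e1 : pb * (v - g) = a * (pb * (v₁ - g)) + b * (pb * (v₂ - g)) := by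
          rw [hv]; linear_combination pb * g * hab
        rw [e1]
        exact add_le_add (mul_le_mul_of_nonneg_left (le_max_left _ _) ha)
          (mul_le_mul_of_nonneg_left (le_max_left _ _) hb)
      · have e1 : ps * (v - g) = a * (ps * (v₁ - g)) + b * (ps * (v₂ - g)) := by
          rw [hv]; linear_combination ps * g * hab
        rw [e1]
        exact add_le_add (mul_le_mul_of_nonneg_left (le_max_right _ _) ha)
          (mul_le_mul_of_nonneg_left (le_max_right _ _) hb)
    -- bound the V part
    have hVineq := hVconv.2 (Set.mem_Ici.mpr (by linarith : (0:ℝ) ≤ y₁ - v₁))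
      (Set.mem_Ici.mpr (by linarith : (0:ℝ) ≤ y₂ - v₂)) ha hb hab
    simp only [smul_eq_mul] at hVineq
    have e2 : a * (y₁ - v₁) + b * (y₂ - v₂) = y - v := by rw [hy, hv]; ring
    rw [e2] at hVineq
    show sInf (S y) ≤ a * (nemP pb ps (v₁ - g) + V (y₁ - v₁)) +
      b * (nemP pb ps (v₂ - g) + V (y₂ - v₂))
    nlinarith [hle, hP, hVineq]
  have hleaux : ∀ ε : ℝ, 0 < ε →
      sInf (S y) ≤ a * sInf (S y₁) + b * sInf (S y₂) + ε := by
    intro ε hε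
    obtain ⟨x₁, hx₁, hx₁lt⟩ :=
      exists_lt_of_csInf_lt (hSne (Set.mem_Ici.mp hy₁)) (lt_add_of_pos_right (sInf (S y₁)) hε)
    obtain ⟨x₂, hx₂, hx₂lt⟩ :=
      exists_lt_of_csInf_lt (hSne (Set.mem_Ici.mp hy₂)) (lt_add_of_pos_right (sInf (S y₂)) hε)
    have h1 := key x₁ hx₁ x₂ hx₂
    nlinarith [mul_le_mul_of_nonneg_left hx₁lt.le ha, mul_le_mul_of_nonneg_left hx₂lt.le hb]
  exact le_of_forall_pos_le_add hleaux
end
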